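/- Let P̃ and P be stochastic matrices on E_k = {0,...,k}, and suppose there exist two coprime positive integers n_1 and n_2 such that P̃^{n_1} ⊴ P^{n_1} and P̃^{n_2} ⊴ P^{n_2}. Then P̃^n ⊴ P^n for every n ≥ n̂(n_1,n_2), where n̂(n_1,n_2) := inf{ r ∈ ℕ : every integer r' ≥ r can be written as r' = a·n_1 + b·n_2 with a, b ∈ ℕ } (this number is finite since n_1 and n_2 are coprime, and n̂(n_1,n_2) ≤ n_1 n_2). -/

import Mathlib

/-! The relation `⊴` is multiplicative on nonnegative matrices: the tail sums of the rows of
`A' * B'` and `A * B` are averages, under the rows of `A'` and `A`, of the tail sums of `B'` and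
`B`; the latter can be separated by a monotone nonnegative function, and expectations of such
functions are monotone in the stochastic order. Hence the set of `n` with `P̃^n ⊴ P^n` is closed
under addition, and every `n ≥ n̂(n₁, n₂)` is of the form `a n₁ + b n₂`, where `n̂(n₁, n₂)` is
finite by the two-coin Frobenius bound `(n₁ - 1)(n₂ - 1)`. -/

open Finset Matrix

/-- Usual stochastic order between two vectors on `Fin m`. -/
def stDom {m : ℕ} (μ ν : Fin m → ℝ) : Prop :=
  ∀ j : Fin m, ∑ l ∈ Finset.univ.filter (fun l => j ≤ l), μ l ≤
    ∑ l ∈ Finset.univ.filter (fun l => j ≤ l), ν l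

/-- A (row-)stochastic matrix. -/
def IsStochastic {m : ℕ} (P : Matrix (Fin m) (Fin m) ℝ) : Prop :=
  (∀ i j, 0 ≤ P i j) ∧ ∀ i, ∑ j, P i j = 1

/-- The relation `A' ⊴ A`. -/
def tri {m : ℕ} (A' A : Matrix (Fin m) (Fin m) ℝ) : Prop :=
  ∀ i j : Fin m, i ≤ j → stDom (A' i) (A j)

/-- `n̂(n₁,n₂)`: the least `r` such that every integer `r' ≥ r` can be written
as `a n₁ + b n₂` with `a b ∈ ℕ`. -/
noncomputable def nhat (n1 n2 : ℕ) : ℕ :=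
  sInf { r : ℕ | ∀ r' : ℕ, r ≤ r' → ∃ a b : ℕ, r' = a * n1 + b * n2 }

theorem stDom.comp_succ {m : ℕ} {μ ν : Fin (m + 1) → ℝ} (h : stDom μ ν) :
    stDom (fun i => μ i.succ) (fun i => ν i.succ) := by
  intro j
  simpa [sum_filter, Fin.sum_univ_succ, Fin.succ_le_succ_iff] using h j.succ

theorem Fin.sum_mul_eq_mul_sum_add_sum_succ_mul_sub {α : Type*} [CommRing α] {m : ℕ}
    (μ f : Fin (m + 1) → α) :
    ∑ l, μ l * f l = f 0 * ∑ l, μ l + ∑ i : Fin m, μ i.succ * (f i.succ - f 0) := by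
  simp only [Fin.sum_univ_succ, mul_sub, sum_sub_distrib, ← sum_mul]
  ring

theorem stDom.sum_mul_le_sum_mul {m : ℕ} {μ ν f : Fin m → ℝ} (h : stDom μ ν)
    (hf : Monotone f) (hf₀ : 0 ≤ f) : ∑ l, μ l * f l ≤ ∑ l, ν l * f l := by
  induction m with
  | zero => simp
  | succ m ih =>
    have htotal : ∑ l, μ l ≤ ∑ l, ν l := by simpa using h 0
    have htail : ∑ i : Fin m, μ i.succ * (f i.succ - f 0) ≤
        ∑ i : Fin m, ν i.succ * (f i.succ - f 0) :=
      ih h.comp_succ (fun _ _ hij => sub_le_sub_right (hf (Fin.succ_le_succ_iff.2 hij)) _)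
        (fun i => sub_nonneg.2 (hf (Fin.zero_le _)))
    rw [Fin.sum_mul_eq_mul_sum_add_sum_succ_mul_sub μ,
      Fin.sum_mul_eq_mul_sum_add_sum_succ_mul_sub ν]
    gcongr
    exact hf₀ 0

theorem exists_monotone_between {ι α : Type*} [Preorder ι] [LocallyFiniteOrderTop ι]
    [SemilatticeInf α] {g h : ι → α} (hgh : ∀ t u, t ≤ u → g t ≤ h u) :
    ∃ e : ι → α, Monotone e ∧ g ≤ e ∧ e ≤ h :=
  ⟨fun t => (Ici t).inf' nonempty_Ici h,
    fun _ _ htt' => inf'_mono _ (Ici_subset_Ici.2 htt') _,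
    fun t => le_inf' _ _ fun u hu => hgh t u (mem_Ici.1 hu),
    fun _ => inf'_le _ (mem_Ici.2 le_rfl)⟩

theorem Matrix.sum_mul_apply {l m n α : Type*} [Fintype m] [NonUnitalNonAssocSemiring α]
    (A : Matrix l m α) (B : Matrix m n α) (s : Finset n) (i : l) :
    ∑ j ∈ s, (A * B) i j = ∑ t, A i t * ∑ j ∈ s, B t j := by
  simp only [Matrix.mul_apply, mul_sum]
  exact sum_comm

theorem tri_one (m : ℕ) : tri (1 : Matrix (Fin m) (Fin m) ℝ) 1 := by
  intro i j hij c
  simp only [Matrix.one_apply, sum_ite_eq, mem_filter, mem_univ, true_and]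
  split_ifs with hci hcj <;> norm_num
  exact hcj (hci.trans hij)

theorem tri.mul {m : ℕ} {A' A B' B : Matrix (Fin m) (Fin m) ℝ} (hA' : ∀ i j, 0 ≤ A' i j)
    (hA : ∀ i j, 0 ≤ A i j) (hB' : ∀ i j, 0 ≤ B' i j) (hAA : tri A' A) (hBB : tri B' B) :
    tri (A' * B') (A * B) := by
  intro i j hij c
  set s := univ.filter (fun l => c ≤ l)
  obtain ⟨e, he, hB'e, heB⟩ := exists_monotone_between (fun t u htu => hBB t u htu c)
  have he₀ : 0 ≤ e := fun t => (sum_nonneg fun l _ => hB' t l).trans (hB'e t)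
  calc ∑ l ∈ s, (A' * B') i l = ∑ t, A' i t * ∑ l ∈ s, B' t l := Matrix.sum_mul_apply ..
    _ ≤ ∑ t, A' i t * e t := by gcongr with t; exacts [hA' i t, hB'e t]
    _ ≤ ∑ t, A j t * e t := (hAA i j hij).sum_mul_le_sum_mul he he₀
    _ ≤ ∑ t, A j t * ∑ l ∈ s, B t l := by gcongr with t; exacts [hA j t, heB t]
    _ = ∑ l ∈ s, (A * B) j l := (Matrix.sum_mul_apply ..).symm

theorem tri.pow {m : ℕ} {A' A : Matrix (Fin m) (Fin m) ℝ} (hA' : ∀ i j, 0 ≤ A' i j)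
    (hA : ∀ i j, 0 ≤ A i j) (hAA : tri A' A) (n : ℕ) : tri (A' ^ n) (A ^ n) := by
  induction n with
  | zero => simpa using tri_one m
  | succ n ih =>
    rw [pow_succ, pow_succ]
    exact ih.mul (Matrix.pow_apply_nonneg hA' n) (Matrix.pow_apply_nonneg hA n) hA' hAA

theorem exists_eq_mul_add_mul_of_coprime {n₁ n₂ : ℕ} (hcop : Nat.Coprime n₁ n₂) :
    ∃ r, ∀ r' : ℕ, r ≤ r' → ∃ a b : ℕ, r' = a * n₁ + b * n₂ :=
  ⟨n₁.pred * n₂.pred, fun r' hr' => by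
    obtain ⟨a, b, h⟩ := Nat.exists_add_mul_eq_of_gcd_dvd_of_mul_pred_le n₁ n₂ r'
      (by simp [hcop.gcd_eq_one]) hr'
    exact ⟨a, b, h.symm⟩⟩

theorem tri_pow_of_coprime_general
    (k : ℕ) (P Pt : Matrix (Fin (k + 1)) (Fin (k + 1)) ℝ)
    (hP : IsStochastic P) (hPt : IsStochastic Pt)
    (n1 n2 : ℕ) (hcop : Nat.Coprime n1 n2)
    (h1 : tri (Pt ^ n1) (P ^ n1)) (h2 : tri (Pt ^ n2) (P ^ n2)) :
    ∀ n : ℕ, nhat n1 n2 ≤ n → tri (Pt ^ n) (P ^ n) := by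
  intro n hn
  obtain ⟨a, b, rfl⟩ := Nat.sInf_mem (exists_eq_mul_add_mul_of_coprime hcop) n hn
  have hPow := Matrix.pow_apply_nonneg hP.1
  have hPtPow := Matrix.pow_apply_nonneg hPt.1
  simp only [pow_add, mul_comm _ n1, mul_comm _ n2, pow_mul]
  exact (h1.pow (hPtPow n1) (hPow n1) a).mul (Matrix.pow_apply_nonneg (hPtPow n1) a)
    (Matrix.pow_apply_nonneg (hPow n1) a) (Matrix.pow_apply_nonneg (hPtPow n2) b)
    (h2.pow (hPtPow n2) (hPow n2) b)

/-- Theorem 6 (De Santis–Spizzichino): if `P̃^{n₁} ⊴ P^{n₁}` and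
`P̃^{n₂} ⊴ P^{n₂}` for two coprime positive integers `n₁, n₂`, then
`P̃^n ⊴ P^n` for every `n ≥ n̂(n₁,n₂)`. -/
theorem tri_pow_of_coprime
    (k : ℕ) (P Pt : Matrix (Fin (k + 1)) (Fin (k + 1)) ℝ)
    (hP : IsStochastic P) (hPt : IsStochastic Pt)
    (n1 n2 : ℕ) (hn1 : 0 < n1) (hn2 : 0 < n2) (hcop : Nat.Coprime n1 n2)
    (h1 : tri (Pt ^ n1) (P ^ n1)) (h2 : tri (Pt ^ n2) (P ^ n2)) :
    ∀ n : ℕ, nhat n1 n2 ≤ n → tri (Pt ^ n) (P ^ n) :=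
  tri_pow_of_coprime_general k P Pt hP hPt n1 n2 hcop h1 h2
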